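/- The function f : ℂ → ℂ given by f(z) = exp(z) − z is surjective; in particular the equation exp(z) = z + w has a solution for every w ∈ ℂ. -/

import Mathlib

/-!
Fix `w` and a large natural number `k`, and put `a = w + 2πik`. On the closed disc of radius `k`
about `a` the map `ζ ↦ log ζ + a` is a contraction, since `|log' ζ| = 1 / |ζ|` is small far from
`0`, and it maps the disc into itself, since `log` grows only logarithmically. Its fixed point
`ζ` satisfies `exp (ζ - a) = ζ`, and as `exp (2πik) = 1`, `z = ζ - w` solves `exp z = z + w`.
-/

open Complex

open scoped NNReal Real

lemma Real.log_ten_mul_add_pi_le {x : ℝ} (hx : 100 ≤ x) : Real.log (10 * x) + π ≤ x := by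
  set s := √(10 * x)
  have hs_sq : s ^ 2 = 10 * x := Real.sq_sqrt (by linarith)
  have hs : 30 ≤ s := Real.le_sqrt_of_sq_le (by linarith)
  have hlog : Real.log (10 * x) ≤ 2 * (s - 1) := by
    rw [← hs_sq, Real.log_pow, Nat.cast_ofNat]
    linarith [Real.log_le_sub_one_of_pos (by linarith : 0 < s)]
  nlinarith [Real.pi_le_four]

namespace Complex

lemma lipschitzOnWith_log_of_le_im {m : ℝ≥0} (hm : 0 < m) :
    LipschitzOnWith m⁻¹ log {ζ : ℂ | m ≤ ζ.im} := by
  refine (convex_halfSpace_im_ge m).lipschitzOnWith_of_nnnorm_hasDerivWithin_le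
    (f' := fun ζ => ζ⁻¹) (fun ζ hζ => ?_) (fun ζ hζ => ?_)
  · have him : (0 : ℝ) < ζ.im := (NNReal.coe_pos.2 hm).trans_le hζ
    exact (hasDerivAt_log (Or.inr him.ne')).hasDerivWithinAt
  · have hnorm : (m : ℝ) ≤ ‖ζ‖ := (le_trans hζ (le_abs_self _)).trans (abs_im_le_norm ζ)
    rw [nnnorm_inv]
    exact inv_anti₀ hm (NNReal.coe_le_coe.1 hnorm)

lemma norm_log_le (ζ : ℂ) : ‖log ζ‖ ≤ |Real.log ‖ζ‖| + π :=
  calc ‖log ζ‖ ≤ |(log ζ).re| + |(log ζ).im| := norm_le_abs_re_add_abs_im _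
    _ ≤ |Real.log ‖ζ‖| + π := by
      rw [log_re, log_im]
      exact add_le_add le_rfl (abs_arg_le_pi ζ)

lemma exists_exp_sub_eq_self {a : ℂ} {R : ℝ} (hR : 0 ≤ R) (him : 1 < a.im - R)
    (hlog : Real.log (‖a‖ + R) + π ≤ R) : ∃ ζ, exp (ζ - a) = ζ := by
  set S := Metric.closedBall a R
  set m := (a.im - R).toNNReal
  have hm : (m : ℝ) = a.im - R := Real.coe_toNNReal _ (by linarith)
  have him_ge : ∀ ζ ∈ S, (m : ℝ) ≤ ζ.im := fun ζ hζ => by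
    have hdev := (abs_le.1 ((abs_im_le_norm (ζ - a)).trans (mem_closedBall_iff_norm.1 hζ))).1
    rw [sub_im] at hdev
    linarith
  have hmaps : Set.MapsTo (fun ζ => log ζ + a) S S := fun ζ hζ => by
    have hζ_norm : ‖ζ‖ ≤ ‖a‖ + R := norm_le_of_mem_closedBall hζ
    have hζ_one : 1 ≤ ‖ζ‖ :=
      (by linarith [him_ge ζ hζ] : 1 ≤ ζ.im).trans ((le_abs_self _).trans (abs_im_le_norm ζ))
    rw [mem_closedBall_iff_norm, add_sub_cancel_right]
    calc ‖log ζ‖ ≤ |Real.log ‖ζ‖| + π := norm_log_le ζ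
      _ = Real.log ‖ζ‖ + π := by rw [abs_of_nonneg (Real.log_nonneg hζ_one)]
      _ ≤ Real.log (‖a‖ + R) + π := by gcongr
      _ ≤ R := hlog
  have hlip : LipschitzOnWith m⁻¹ (fun ζ => log ζ + a) S := fun x hx y hy => by
    rw [edist_add_right]
    exact lipschitzOnWith_log_of_le_im (by rw [← NNReal.coe_pos, hm]; linarith)
      (him_ge x hx) (him_ge y hy)
  have hcontr : ContractingWith m⁻¹ (hmaps.restrict _ S S) :=
    ⟨inv_lt_one_of_one_lt₀ (by rw [← NNReal.coe_lt_coe, hm]; exact him),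
      hlip.mapsToRestrict hmaps⟩
  obtain ⟨ζ, hζS, hζ, -⟩ := hcontr.exists_fixedPoint' Metric.isClosed_closedBall.isComplete
    hmaps (Metric.mem_closedBall_self hR) (edist_ne_top _ _)
  have hζ0 : ζ ≠ 0 := by
    rintro rfl
    linarith [him_ge 0 hζS, zero_im]
  exact ⟨ζ, by rw [← eq_sub_of_add_eq hζ.eq, exp_log hζ0]⟩

lemma exists_exp_eq_add (w : ℂ) : ∃ z, exp z = z + w := by
  obtain ⟨k, hk⟩ := exists_nat_ge (max 100 ‖w‖)
  have hk100 : 100 ≤ (k : ℝ) := le_of_max_le_left hk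
  have hkw : ‖w‖ ≤ k := le_of_max_le_right hk
  have hw_im : -k ≤ w.im := (abs_le.1 ((abs_im_le_norm w).trans hkw)).1
  set a := w + 2 * π * k * I with ha
  have ha_im : a.im = w.im + 2 * π * k := by simp [a]
  have ha_norm : ‖a‖ ≤ ‖w‖ + 2 * π * k :=
    (norm_add_le _ _).trans_eq (by simp [Real.pi_pos.le])
  obtain ⟨ζ, hζ⟩ : ∃ ζ, exp (ζ - a) = ζ := by
    refine exists_exp_sub_eq_self (R := k) (by positivity) ?_ ?_
    · nlinarith [Real.pi_gt_three]
    · refine le_trans ?_ (Real.log_ten_mul_add_pi_le hk100)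
      gcongr
      nlinarith [Real.pi_le_four]
  refine ⟨ζ - w, ?_⟩
  calc exp (ζ - w) = exp (ζ - a) * exp (k * (2 * π * I)) := by
        rw [← exp_add, ha]; congr 1; ring
    _ = ζ - w + w := by rw [hζ, exp_nat_mul_two_pi_mul_I]; ring

end Complex

/-- The entire function `z ↦ exp z − z` is surjective; in particular `exp z = z + w`
has a solution for every `w ∈ ℂ`. -/
theorem exp_sub_id_surjective :
    Function.Surjective (fun z : ℂ => exp z - z) ∧ ∀ w : ℂ, ∃ z : ℂ, exp z = z + w :=
  ⟨fun w => (Complex.exists_exp_eq_add w).imp fun z hz => by simp [hz], Complex.exists_exp_eq_add⟩
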